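/- arXiv:1204.2484 — 2 statements merged into one kernel-verified Lean document; each statement's English description precedes it below -/
import Mathlib

section
/- Let ρ₁, ρ₂ and ρ₁′, ρ₂′ be as in the hexagon configuration: ρ₁, ρ₂ are overlapping rhombi whose union is a trapezoid, and ρ₁′, ρ₂′ are overlapping rhombi whose union is the trapezoid glued to the first one along their common longer side. Then for every hive flow f: if ρ₁ and ρ₂ are f-flat, then ρ₁′ and ρ₂′ are also f-flat. -/
/-!
Framework for hive flows on the honeycomb graph, following
Bürgisser–Ikenmeyer, "A max-flow algorithm for positivity of
Littlewood-Richardson coefficients".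

Vertices of the triangular graph `Δ` with parameter `n` are the points
`x(m,i)` with `0 ≤ i ≤ m ≤ n` (`m` = row counted from the top, `i` =
position in the row counted from the left).
-/

namespace LRFlows

/-- Edges of the triangular graph `Δ`:
* `dl m i` is the down-left slanted edge from `x(m,i)` to `x(m+1,i)`,
* `dr m i` is the down-right slanted edge from `x(m,i)` to `x(m+1,i+1)`,
* `hz m i` is the horizontal edge from `x(m,i)` to `x(m,i+1)`. -/
inductive EdgeK : Type
  | dl (m i : ℕ)
  | dr (m i : ℕ)
  | hz (m i : ℕ)
  deriving DecidableEq

namespace EdgeK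

def valid (n : ℕ) : EdgeK → Prop
  | dl m i => i ≤ m ∧ m + 1 ≤ n
  | dr m i => i ≤ m ∧ m + 1 ≤ n
  | hz m i => i + 1 ≤ m ∧ m ≤ n

end EdgeK

/-- Hive triangles: `up m i` is the upright triangle with vertices
`x(m,i), x(m+1,i), x(m+1,i+1)`; `down m i` is the downright triangle with
vertices `x(m,i), x(m,i+1), x(m+1,i+1)`. -/
inductive Tri : Type
  | up (m i : ℕ)
  | down (m i : ℕ)
  deriving DecidableEq

namespace Tri

def valid (n : ℕ) : Tri → Prop
  | up m i => i ≤ m ∧ m + 1 ≤ n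
  | down m i => i + 1 ≤ m ∧ m + 1 ≤ n

/-- The three sides of a hive triangle, listed in clockwise order. -/
def sides : Tri → List EdgeK
  | up m i => [.dr m i, .hz (m+1) i, .dl m i]
  | down m i => [.hz m i, .dl m (i+1), .dr m i]

end Tri

/-- `e` is a side of the hive triangle `T`. -/
def sideOf (e : EdgeK) (T : Tri) : Prop := e ∈ T.sides

/-- The side following a given side of a hive triangle in clockwise order
around the triangle. -/
def cwNext : Tri → EdgeK → EdgeK
  | .up m i, e =>
      if e = .dr m i then .hz (m+1) i else if e = .hz (m+1) i then .dl m i else .dr m i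
  | .down m i, e =>
      if e = .hz m i then .dl m (i+1) else if e = .dl m (i+1) then .dr m i else .hz m i

/-- The edges on the right border of `Δ`. -/
def onRight (n : ℕ) (e : EdgeK) : Prop := ∃ m, m + 1 ≤ n ∧ e = .dr m m
/-- The edges on the bottom border of `Δ`. -/
def onBottom (n : ℕ) (e : EdgeK) : Prop := ∃ i, i + 1 ≤ n ∧ e = .hz n i
/-- The edges on the left border of `Δ`. -/
def onLeft (n : ℕ) (e : EdgeK) : Prop := ∃ m, m + 1 ≤ n ∧ e = .dl m 0

/-- The unique upright hive triangle having `e` as a side. -/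
def upOf : EdgeK → Tri
  | .dl m i => .up m i
  | .dr m i => .up m i
  | .hz m i => .up (m - 1) i

/-- The downright hive triangle having `e` as a side, if any. -/
def dnOf? : EdgeK → Option Tri
  | .dl m i => if i = 0 then none else some (.down m (i - 1))
  | .dr m i => some (.down m i)
  | .hz m i => some (.down m i)

/-- A flow class on the honeycomb graph `G`, recorded by its throughput
function `E(Δ) → ℝ`:  `thru k` is the net flow through the white vertex on
the edge `k` into the adjacent upright hive triangle. -/
structure Flow : Type where
  dl : ℕ → ℕ → ℝ
  dr : ℕ → ℕ → ℝ
  hz : ℕ → ℕ → ℝ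

namespace Flow

def thru (f : Flow) : EdgeK → ℝ
  | .dl m i => f.dl m i
  | .dr m i => f.dr m i
  | .hz m i => f.hz m i

end Flow

noncomputable instance : Add Flow :=
  ⟨fun f g => ⟨fun m i => f.dl m i + g.dl m i, fun m i => f.dr m i + g.dr m i,
    fun m i => f.hz m i + g.hz m i⟩⟩

noncomputable instance : SMul ℝ Flow :=
  ⟨fun c f => ⟨fun m i => c * f.dl m i, fun m i => c * f.dr m i, fun m i => c * f.hz m i⟩⟩

/-- A flow class is recorded by its values on the (valid) edges of `Δ` only;
we normalize all other values to `0`, so that flow classes correspond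
bijectively to normalized `Flow`s. -/
def Normalized (n : ℕ) (f : Flow) : Prop :=
  (∀ m i, ¬ (EdgeK.dl m i).valid n → f.dl m i = 0) ∧
  (∀ m i, ¬ (EdgeK.dr m i).valid n → f.dr m i = 0) ∧
  (∀ m i, ¬ (EdgeK.hz m i).valid n → f.hz m i = 0)

/-- Kirchhoff's conservation laws, in throughput form: the throughputs of the
three sides of every hive triangle (measured into the respective upright
triangle) sum to zero. -/
def IsFlow (n : ℕ) (f : Flow) : Prop :=
  (∀ m i, i ≤ m → m + 1 ≤ n → f.dl m i + f.dr m i + f.hz (m + 1) i = 0) ∧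
  (∀ m i, i + 1 ≤ m → m + 1 ≤ n → f.hz m i + f.dl m (i + 1) + f.dr m i = 0)

/-- An integral flow class. -/
def IntegralFlow (f : Flow) : Prop :=
  ∀ m i, (∃ z : ℤ, f.dl m i = (z : ℝ)) ∧ (∃ z : ℤ, f.dr m i = (z : ℝ)) ∧
    (∃ z : ℤ, f.hz m i = (z : ℝ))

/-- A `2^ℓ`-integral flow class. -/
def PowIntegral (l : ℕ) (f : Flow) : Prop :=
  ∀ m i, (∃ z : ℤ, f.dl m i = (z : ℝ) * 2 ^ l) ∧ (∃ z : ℤ, f.dr m i = (z : ℝ) * 2 ^ l) ∧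
    (∃ z : ℤ, f.hz m i = (z : ℝ) * 2 ^ l)

/-- Rhombi (unions of an upright and a downright hive triangle sharing a side),
indexed by the direction of their diagonal:
* `hzD m i` has horizontal diagonal `hz (m+1) i`, triangles `up m i` and `down (m+1) i`;
* `dlD m i` has diagonal `dl m (i+1)`, triangles `up m (i+1)` and `down m i`;
* `drD m i` has diagonal `dr m i`, triangles `up m i` and `down m i`. -/
inductive Rhombus : Type
  | hzD (m i : ℕ)
  | dlD (m i : ℕ)
  | drD (m i : ℕ)
  deriving DecidableEq

namespace Rhombus

def valid (n : ℕ) : Rhombus → Prop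
  | hzD m i => i ≤ m ∧ m + 2 ≤ n
  | dlD m i => i + 1 ≤ m ∧ m + 1 ≤ n
  | drD m i => i + 1 ≤ m ∧ m + 1 ≤ n

/-- The diagonal of a rhombus (joining its two obtuse vertices). -/
def diag : Rhombus → EdgeK
  | hzD m i => .hz (m+1) i
  | dlD m i => .dl m (i+1)
  | drD m i => .dr m i

/-- The upright hive triangle of a rhombus. -/
def triU : Rhombus → Tri
  | hzD m i => .up m i
  | dlD m i => .up m (i+1)
  | drD m i => .up m i

/-- The downright hive triangle of a rhombus. -/
def triD : Rhombus → Tri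
  | hzD m i => .down (m+1) i
  | dlD m i => .down m i
  | drD m i => .down m i

end Rhombus

/-- The slack `σ(ρ,f)` of a rhombus `ρ` with respect to a flow class `f`:
the sum of the values of the corresponding hive function at the two obtuse
vertices minus the sum at the two acute vertices, expressed through the
throughputs of the two sides of `ρ` parallel to one fixed direction. -/
noncomputable def slack (f : Flow) : Rhombus → ℝ
  | .hzD m i => f.dl (m+1) (i+1) - f.dl m i
  | .dlD m i => f.hz (m+1) (i+1) - f.hz m i
  | .drD m i => f.hz m i - f.hz (m+1) i

/-- A hive flow: a flow class all of whose rhombus slacks are nonnegative. -/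
def IsHive (n : ℕ) (f : Flow) : Prop :=
  IsFlow n f ∧ ∀ ρ : Rhombus, ρ.valid n → 0 ≤ slack f ρ

/-- `∑_{i<n} lam i`, i.e. `|λ|` for `λ ∈ ℕⁿ`. -/
def psum (n : ℕ) (lam : ℕ → ℕ) : ℕ := ∑ i ∈ Finset.range n, lam i

/-- `λ, μ, ν ∈ ℕⁿ` are weakly decreasing with `|ν| = |λ| + |μ|`. -/
def PartitionData (n : ℕ) (lam mu nu : ℕ → ℕ) : Prop :=
  (∀ i j, i ≤ j → j + 1 ≤ n → lam j ≤ lam i) ∧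
  (∀ i j, i ≤ j → j + 1 ≤ n → mu j ≤ mu i) ∧
  (∀ i j, i ≤ j → j + 1 ≤ n → nu j ≤ nu i) ∧
  psum n nu = psum n lam + psum n mu

/-- Membership in the polytope `B(λ,μ,ν)` of bounded hive flows.
The `i`-th right border edge from the top is `dr (i-1) (i-1)` with capacity
`λ_i = lam (i-1)`; the `i`-th bottom border edge from the right is
`hz n (n-i)` with capacity `μ_i`; the `i`-th left border edge from the top is
`dl (i-1) 0` with capacity `ν_i`. -/
def MemB (n : ℕ) (lam mu nu : ℕ → ℕ) (f : Flow) : Prop :=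
  Normalized n f ∧ IsHive n f ∧
  (∀ m, m + 1 ≤ n → 0 ≤ f.dr m m ∧ f.dr m m ≤ (lam m : ℝ)) ∧
  (∀ i, i + 1 ≤ n → 0 ≤ f.hz n i ∧ f.hz n i ≤ (mu (n - 1 - i) : ℝ)) ∧
  (∀ m, m + 1 ≤ n → 0 ≤ -(f.dl m 0) ∧ -(f.dl m 0) ≤ (nu m : ℝ))

/-- Membership in the polytope `P(λ,μ,ν)` of capacity achieving hive flows. -/
def MemP (n : ℕ) (lam mu nu : ℕ → ℕ) (f : Flow) : Prop :=
  Normalized n f ∧ IsHive n f ∧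
  (∀ m, m + 1 ≤ n → f.dr m m = (lam m : ℝ)) ∧
  (∀ i, i + 1 ≤ n → f.hz n i = (mu (n - 1 - i) : ℝ)) ∧
  (∀ m, m + 1 ≤ n → -(f.dl m 0) = (nu m : ℝ))

/-- `B(λ,μ,ν)_ℤ`. -/
def MemBZ (n : ℕ) (lam mu nu : ℕ → ℕ) (f : Flow) : Prop :=
  MemB n lam mu nu f ∧ IntegralFlow f

/-- `P(λ,μ,ν)_ℤ`. -/
def MemPZ (n : ℕ) (lam mu nu : ℕ → ℕ) (f : Flow) : Prop :=
  MemP n lam mu nu f ∧ IntegralFlow f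

/-- The overall throughput `δ(f)`: the total throughput through the right and
bottom borders of `Δ`. -/
noncomputable def thr (n : ℕ) (f : Flow) : ℝ :=
  ∑ m ∈ Finset.range n, f.dr m m + ∑ i ∈ Finset.range n, f.hz n i

/-! ### The honeycomb graph `G` -/

/-- Vertices of the honeycomb graph `G`: white vertices on the edges of `Δ`,
black vertices in the hive triangles, a source and a target. -/
inductive GVertex : Type
  | white (e : EdgeK)
  | black (T : Tri)
  | src
  | tgt
  deriving DecidableEq

/-- The adjacency of the directed honeycomb graph `G` (each undirected edge
appears as two opposite directed edges). -/
def GAdj (n : ℕ) (u v : GVertex) : Prop :=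
  match u, v with
  | .white e, .black T => e.valid n ∧ T.valid n ∧ sideOf e T
  | .black T, .white e => e.valid n ∧ T.valid n ∧ sideOf e T
  | .src, .white e => e.valid n ∧ (onRight n e ∨ onBottom n e)
  | .white e, .src => e.valid n ∧ (onRight n e ∨ onBottom n e)
  | .tgt, .white e => e.valid n ∧ onLeft n e
  | .white e, .tgt => e.valid n ∧ onLeft n e
  | _, _ => False

/-- The (cyclically) consecutive pairs of a list. -/
def cyclePairs (l : List GVertex) : List (GVertex × GVertex) := l.zip (l.rotate 1)

/-- A (directed) cycle in `G`, recorded as the list of its pairwise distinct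
vertices. -/
def IsGCycle (n : ℕ) (l : List GVertex) : Prop :=
  l ≠ [] ∧ l.Nodup ∧ ∀ p ∈ cyclePairs l, GAdj n p.1 p.2

/-- A proper cycle uses neither the source nor the target. -/
def ProperCycle (l : List GVertex) : Prop :=
  GVertex.src ∉ l ∧ GVertex.tgt ∉ l

/-- The throughput function of the integral flow class defined by a cycle in `G`. -/
def cycleDelta (l : List GVertex) (e : EdgeK) : ℝ :=
  (if (GVertex.white e, GVertex.black (upOf e)) ∈ cyclePairs l then (1 : ℝ) else 0) -
  (if (GVertex.black (upOf e), GVertex.white e) ∈ cyclePairs l then (1 : ℝ) else 0)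

/-- The flow class `f + c` for a cycle `c` in `G`. -/
noncomputable def addCycle (f : Flow) (l : List GVertex) : Flow :=
  ⟨fun m i => f.dl m i + cycleDelta l (.dl m i),
   fun m i => f.dr m i + cycleDelta l (.dr m i),
   fun m i => f.hz m i + cycleDelta l (.hz m i)⟩

/-- `f` and `g` are neighbours: `g - f` is a proper cycle in `G`. -/
def NeighbourFlow (n : ℕ) (f g : Flow) : Prop :=
  ∃ l : List GVertex, IsGCycle n l ∧ ProperCycle l ∧
    ∀ e : EdgeK, g.thru e - f.thru e = cycleDelta l e

/-- The support of (the reduced representative of) a flow class `d`, as a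
relation on directed edges of `G`. -/
def suppEdge (n : ℕ) (d : Flow) (u v : GVertex) : Prop :=
  match u, v with
  | .white e, .black T =>
      e.valid n ∧ T.valid n ∧ ((T = upOf e ∧ 0 < d.thru e) ∨ (dnOf? e = some T ∧ d.thru e < 0))
  | .black T, .white e =>
      e.valid n ∧ T.valid n ∧ ((T = upOf e ∧ d.thru e < 0) ∨ (dnOf? e = some T ∧ 0 < d.thru e))
  | .src, .white e => e.valid n ∧ (onRight n e ∨ onBottom n e) ∧ 0 < d.thru e
  | .white e, .src => e.valid n ∧ (onRight n e ∨ onBottom n e) ∧ d.thru e < 0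
  | .tgt, .white e => e.valid n ∧ onLeft n e ∧ 0 < d.thru e
  | .white e, .tgt => e.valid n ∧ onLeft n e ∧ d.thru e < 0
  | _, _ => False

/-! ### Turns and slack contributions -/

/-- A turn: a path of length 2 in `G` inside `Δ`, entering a hive triangle
through the white vertex on side `inE` and leaving it through the white vertex
on side `outE`. -/
structure Turn : Type where
  tri : Tri
  inE : EdgeK
  outE : EdgeK
  deriving DecidableEq

namespace Turn

def valid (n : ℕ) (t : Turn) : Prop :=
  t.tri.valid n ∧ sideOf t.inE t.tri ∧ sideOf t.outE t.tri ∧ t.inE ≠ t.outE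

end Turn

/-- A turn is counterclockwise iff it goes to the clockwise-next side
(such a turn rotates counterclockwise around its pivot vertex). -/
def IsCCWTurn (t : Turn) : Prop := t.outE = cwNext t.tri t.inE

/-- A turn is clockwise iff it comes from the clockwise-next side of its exit. -/
def IsCWTurn (t : Turn) : Prop := t.inE = cwNext t.tri t.outE

/-- The side of the triangle of a turn not used by the turn. -/
def thirdSide (t : Turn) : EdgeK :=
  if cwNext t.tri t.outE = t.inE then cwNext t.tri t.inE else cwNext t.tri t.outE

/-- A slack contribution of a rhombus: a single turn (at an acute angle) or a
concatenated pair of turns (around an obtuse angle). -/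
inductive Contrib : Type
  | single (t : Turn)
  | double (t₁ t₂ : Turn)
  deriving DecidableEq

/-- The four negative slack contributions `Ψ₋(ρ)` of a rhombus: the two
counterclockwise turns at the acute angles, and the two clockwise length-4
paths around the obtuse angles. -/
def negContrib (ρ : Rhombus) : Fin 4 → Contrib :=
  ![Contrib.single ⟨ρ.triU, cwNext ρ.triU ρ.diag, cwNext ρ.triU (cwNext ρ.triU ρ.diag)⟩,
    Contrib.single ⟨ρ.triD, cwNext ρ.triD ρ.diag, cwNext ρ.triD (cwNext ρ.triD ρ.diag)⟩,
    Contrib.double ⟨ρ.triU, cwNext ρ.triU ρ.diag, ρ.diag⟩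
      ⟨ρ.triD, ρ.diag, cwNext ρ.triD (cwNext ρ.triD ρ.diag)⟩,
    Contrib.double ⟨ρ.triD, cwNext ρ.triD ρ.diag, ρ.diag⟩
      ⟨ρ.triU, ρ.diag, cwNext ρ.triU (cwNext ρ.triU ρ.diag)⟩]

/-- The four positive slack contributions `Ψ₊(ρ)` of a rhombus: the two
clockwise turns at the acute angles, and the two counterclockwise length-4
paths around the obtuse angles. -/
def posContrib (ρ : Rhombus) : Fin 4 → Contrib :=
  ![Contrib.single ⟨ρ.triU, cwNext ρ.triU (cwNext ρ.triU ρ.diag), cwNext ρ.triU ρ.diag⟩,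
    Contrib.single ⟨ρ.triD, cwNext ρ.triD (cwNext ρ.triD ρ.diag), cwNext ρ.triD ρ.diag⟩,
    Contrib.double ⟨ρ.triD, cwNext ρ.triD (cwNext ρ.triD ρ.diag), ρ.diag⟩
      ⟨ρ.triU, ρ.diag, cwNext ρ.triU ρ.diag⟩,
    Contrib.double ⟨ρ.triU, cwNext ρ.triU (cwNext ρ.triU ρ.diag), ρ.diag⟩
      ⟨ρ.triD, ρ.diag, cwNext ρ.triD ρ.diag⟩]

/-- The antipodal contribution of the `j`-th negative slack contribution of a
rhombus: reverse it and rotate by 180°.  It is a positive contribution. -/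
def antipodalContrib (ρ : Rhombus) : Fin 4 → Contrib :=
  ![posContrib ρ 1, posContrib ρ 0, posContrib ρ 3, posContrib ρ 2]

/-- The directed edges of `G` used by a turn. -/
def turnGEdges (t : Turn) : List (GVertex × GVertex) :=
  [(GVertex.white t.inE, GVertex.black t.tri), (GVertex.black t.tri, GVertex.white t.outE)]

/-- The directed edges of `G` used by a slack contribution. -/
def Contrib.gedges : Contrib → List (GVertex × GVertex)
  | .single t => turnGEdges t
  | .double t₁ t₂ => turnGEdges t₁ ++ turnGEdges t₂

/-- The contribution `c` is contained in the support of the flow class `d`. -/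
def ContribInSupp (n : ℕ) (d : Flow) (c : Contrib) : Prop :=
  ∀ p ∈ c.gedges, suppEdge n d p.1 p.2

/-- The contribution `c` is contained in (the edge set of) the cycle `l`. -/
def ContribInCycle (c : Contrib) (l : List GVertex) : Prop :=
  ∀ p ∈ c.gedges, p ∈ cyclePairs l

/-- A cycle is `f`-hive preserving iff it uses no negative slack contribution
of an `f`-flat rhombus. -/
def CycleHivePreserving (n : ℕ) (f : Flow) (l : List GVertex) : Prop :=
  ∀ ρ : Rhombus, ρ.valid n → slack f ρ = 0 →
    ∀ j : Fin 4, ¬ ContribInCycle (negContrib ρ j) l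

/-- A cycle is `f`-secure iff it is `f`-hive preserving and does not use both
counterclockwise turns at the acute angles of any nearly `f`-flat rhombus. -/
def CycleSecure (n : ℕ) (f : Flow) (l : List GVertex) : Prop :=
  CycleHivePreserving n f l ∧
  ∀ ρ : Rhombus, ρ.valid n → slack f ρ = 1 →
    ¬ (ContribInCycle (negContrib ρ 0) l ∧ ContribInCycle (negContrib ρ 1) l)

/-! ### The digraph `R` and residual digraphs -/

/-- Vertices of the auxiliary digraph `R`: the turns, the source and the target. -/
inductive RVertex : Type
  | turn (t : Turn)
  | src
  | tgt
  deriving DecidableEq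

/-- A turnedge: an ordered pair of turns whose concatenation is a path of
length 4 in `G`. -/
def TurnEdge (t₁ t₂ : Turn) : Prop :=
  t₁.outE = t₂.inE ∧ t₁.tri ≠ t₂.tri ∧ t₁.inE ≠ t₂.outE

/-- Adjacency of the digraph `R`. -/
def RAdj (n : ℕ) (u v : RVertex) : Prop :=
  match u, v with
  | .turn t₁, .turn t₂ => t₁.valid n ∧ t₂.valid n ∧ TurnEdge t₁ t₂
  | .src, .turn t => t.valid n ∧ (onRight n t.inE ∨ onBottom n t.inE)
  | .turn t, .src => t.valid n ∧ (onRight n t.outE ∨ onBottom n t.outE)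
  | .turn t, .tgt => t.valid n ∧ onLeft n t.outE
  | .tgt, .turn t => t.valid n ∧ onLeft n t.inE
  | _, _ => False

/-- A turnvertex deleted in `R_f`: a single-turn negative contribution of an
`f`-flat rhombus. -/
def DelTurn (n : ℕ) (f : Flow) (t : Turn) : Prop :=
  ∃ ρ : Rhombus, ρ.valid n ∧ slack f ρ = 0 ∧ ∃ j : Fin 4, negContrib ρ j = Contrib.single t

/-- A turnedge deleted in `R_f`: a double negative contribution of an
`f`-flat rhombus. -/
def DelTurnEdge (n : ℕ) (f : Flow) (t₁ t₂ : Turn) : Prop :=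
  ∃ ρ : Rhombus, ρ.valid n ∧ slack f ρ = 0 ∧ ∃ j : Fin 4, negContrib ρ j = Contrib.double t₁ t₂

/-- A right or bottom border edge saturated by `f`. -/
def SatRB (n : ℕ) (lam mu : ℕ → ℕ) (f : Flow) (e : EdgeK) : Prop :=
  (∃ m, m + 1 ≤ n ∧ e = EdgeK.dr m m ∧ f.dr m m = (lam m : ℝ)) ∨
  (∃ i, i + 1 ≤ n ∧ e = EdgeK.hz n i ∧ f.hz n i = (mu (n - 1 - i) : ℝ))

/-- A left border edge saturated by `f`. -/
def SatL (n : ℕ) (nu : ℕ → ℕ) (f : Flow) (e : EdgeK) : Prop :=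
  ∃ m, m + 1 ≤ n ∧ e = EdgeK.dl m 0 ∧ -(f.dl m 0) = (nu m : ℝ)

/-- Adjacency of the residual digraph `R_f`. -/
def ResidAdj (n : ℕ) (lam mu nu : ℕ → ℕ) (f : Flow) (u v : RVertex) : Prop :=
  match u, v with
  | .turn t₁, .turn t₂ =>
      RAdj n (.turn t₁) (.turn t₂) ∧ ¬ DelTurn n f t₁ ∧ ¬ DelTurn n f t₂ ∧
        ¬ DelTurnEdge n f t₁ t₂
  | .src, .turn t => RAdj n .src (.turn t) ∧ ¬ DelTurn n f t ∧ ¬ SatRB n lam mu f t.inE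
  | .turn t, .src => RAdj n (.turn t) .src ∧ ¬ DelTurn n f t ∧ ¬ SatRB n lam mu f t.outE
  | .turn t, .tgt => RAdj n (.turn t) .tgt ∧ ¬ DelTurn n f t ∧ ¬ SatL n nu f t.outE
  | .tgt, .turn t => RAdj n .tgt (.turn t) ∧ ¬ DelTurn n f t ∧ ¬ SatL n nu f t.inE
  | _, _ => False

/-- A right or bottom border edge at which an additional unit of `2^ℓ` flow
does not fit. -/
def SatRB2 (n : ℕ) (lam mu : ℕ → ℕ) (f : Flow) (l : ℕ) (e : EdgeK) : Prop :=
  (∃ m, m + 1 ≤ n ∧ e = EdgeK.dr m m ∧ (lam m : ℝ) < f.dr m m + 2 ^ l) ∨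
  (∃ i, i + 1 ≤ n ∧ e = EdgeK.hz n i ∧ (mu (n - 1 - i) : ℝ) < f.hz n i + 2 ^ l)

/-- A left border edge at which an additional unit of `2^ℓ` flow does not fit. -/
def SatL2 (n : ℕ) (nu : ℕ → ℕ) (f : Flow) (l : ℕ) (e : EdgeK) : Prop :=
  ∃ m, m + 1 ≤ n ∧ e = EdgeK.dl m 0 ∧ (nu m : ℝ) < -(f.dl m 0) + 2 ^ l

/-- Adjacency of the residual digraph `R_f^(ℓ)`, obtained from `R_f` by
further deleting the turnedges crossing border edges without room for `2^ℓ`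
additional flow. -/
def ResidAdjL (n : ℕ) (lam mu nu : ℕ → ℕ) (f : Flow) (l : ℕ) (u v : RVertex) : Prop :=
  match u, v with
  | .src, .turn t => ResidAdj n lam mu nu f .src (.turn t) ∧ ¬ SatRB2 n lam mu f l t.inE
  | .turn t, .src => ResidAdj n lam mu nu f (.turn t) .src ∧ ¬ SatRB2 n lam mu f l t.outE
  | .turn t, .tgt => ResidAdj n lam mu nu f (.turn t) .tgt ∧ ¬ SatL2 n nu f l t.outE
  | .tgt, .turn t => ResidAdj n lam mu nu f .tgt (.turn t) ∧ ¬ SatL2 n nu f l t.inE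
  | u, v => ResidAdj n lam mu nu f u v

/-- An `s`-`t`-turnpath for an adjacency relation `A` on `RVertex`. -/
def IsSTPath (A : RVertex → RVertex → Prop) (l : List RVertex) : Prop :=
  l.Nodup ∧ l.Chain' A ∧ l.head? = some RVertex.src ∧ l.getLast? = some RVertex.tgt

/-- A `t`-`s`-turnpath. -/
def IsTSPath (A : RVertex → RVertex → Prop) (l : List RVertex) : Prop :=
  l.Nodup ∧ l.Chain' A ∧ l.head? = some RVertex.tgt ∧ l.getLast? = some RVertex.src

/-- A turncycle (which may pass through `s` or `t`). -/
def IsRCycle (A : RVertex → RVertex → Prop) (l : List RVertex) : Prop :=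
  l ≠ [] ∧ l.Nodup ∧ l.Chain' A ∧
    ∀ a b, l.getLast? = some a → l.head? = some b → A a b

/-- A complete turnpath: an `s`-`t`-turnpath, a `t`-`s`-turnpath, or a
turncycle. -/
def IsCompleteTP (A : RVertex → RVertex → Prop) (l : List RVertex) : Prop :=
  IsSTPath A l ∨ IsTSPath A l ∨ IsRCycle A l

/-- The throughput function of `π(p)` for a complete turnpath `p`
(vertex-distinct, so in/outflow at a turnvertex equals occurrence):
total flow into the two turnvertices pointing from the white vertex of the
edge into its upright triangle, minus the total flow out of the two
turnvertices pointing out of the triangle towards the edge. -/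
def pathDelta (l : List RVertex) (e : EdgeK) : ℝ :=
  (if RVertex.turn ⟨upOf e, e, cwNext (upOf e) e⟩ ∈ l then (1 : ℝ) else 0) +
  (if RVertex.turn ⟨upOf e, e, cwNext (upOf e) (cwNext (upOf e) e)⟩ ∈ l then (1 : ℝ) else 0) -
  (if RVertex.turn ⟨upOf e, cwNext (upOf e) e, e⟩ ∈ l then (1 : ℝ) else 0) -
  (if RVertex.turn ⟨upOf e, cwNext (upOf e) (cwNext (upOf e) e), e⟩ ∈ l then (1 : ℝ) else 0)

/-- The flow class `f + π(p)` for a turnpath `p`. -/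
noncomputable def addPath (f : Flow) (l : List RVertex) : Flow :=
  ⟨fun m i => f.dl m i + pathDelta l (.dl m i),
   fun m i => f.dr m i + pathDelta l (.dr m i),
   fun m i => f.hz m i + pathDelta l (.hz m i)⟩

/-! ### Flatspaces, sides, entrance and exit edges -/

/-- Two hive triangles are `f`-adjacent if they form an `f`-flat rhombus. -/
def FlatAdjTri (n : ℕ) (f : Flow) (T T' : Tri) : Prop :=
  ∃ ρ : Rhombus, ρ.valid n ∧ slack f ρ = 0 ∧
    ((T = ρ.triU ∧ T' = ρ.triD) ∨ (T = ρ.triD ∧ T' = ρ.triU))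

/-- An `f`-flatspace: a connected component of the `f`-adjacency relation on
hive triangles. -/
def IsFlatspace (n : ℕ) (f : Flow) (L : Set Tri) : Prop :=
  ∃ T : Tri, T.valid n ∧ L = {T' | Relation.ReflTransGen (FlatAdjTri n f) T T'}

/-- A valid triangle belonging to `L`. -/
def inL (n : ℕ) (L : Set Tri) (T : Tri) : Prop := T.valid n ∧ T ∈ L

/-- The downright triangle adjacent to `e` exists and belongs to `L`. -/
def dnIn (n : ℕ) (L : Set Tri) (e : EdgeK) : Prop :=
  ∃ T, dnOf? e = some T ∧ inL n L T

/-- A border edge of a set `L` of hive triangles: exactly one of its adjacent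
hive triangles belongs to `L`. -/
def BorderEdge (n : ℕ) (L : Set Tri) (e : EdgeK) : Prop :=
  e.valid n ∧ ((inL n L (upOf e) ∧ ¬ dnIn n L e) ∨ (dnIn n L e ∧ ¬ inL n L (upOf e)))

/-- The collinear successor of an edge of `Δ` along its line. -/
def lineSucc : EdgeK → EdgeK
  | .dl m i => .dl (m+1) i
  | .dr m i => .dr (m+1) (i+1)
  | .hz m i => .hz m (i+1)

/-- A side of `L`: a maximal run of consecutive collinear border edges of `L`. -/
def IsSide (n : ℕ) (L : Set Tri) (s : List EdgeK) : Prop :=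
  s ≠ [] ∧ (∀ e ∈ s, BorderEdge n L e) ∧ s.Chain' (fun a b => b = lineSucc a) ∧
  (∀ e a, s.head? = some a → lineSucc e = a → ¬ BorderEdge n L e) ∧
  (∀ a, s.getLast? = some a → ¬ BorderEdge n L (lineSucc a))

/-- The list recording a side of `L` (in `lineSucc` order) runs clockwise
around `L` (i.e. with the interior of `L` on its right). -/
def sideCW (n : ℕ) (L : Set Tri) (s : List EdgeK) : Prop :=
  ∃ e, s.head? = some e ∧
    (match e with
     | EdgeK.dr _ _ => inL n L (upOf e)
     | _ => dnIn n L e)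

/-- `e` is the entrance edge of the side `s` of `L` (the first edge of the
side in clockwise order around `L`). -/
def entranceOf (n : ℕ) (L : Set Tri) (s : List EdgeK) (e : EdgeK) : Prop :=
  (sideCW n L s ∧ s.head? = some e) ∨ (¬ sideCW n L s ∧ s.getLast? = some e)

/-- `e` is the exit edge of the side `s` of `L` (the last edge of the side in
clockwise order around `L`). -/
def exitOf (n : ℕ) (L : Set Tri) (s : List EdgeK) (e : EdgeK) : Prop :=
  (sideCW n L s ∧ s.getLast? = some e) ∨ (¬ sideCW n L s ∧ s.head? = some e)

open Classical in
/-- The throughput `δ(L,e,d)` of a flow class `d` into `L` through a border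
edge `e` of `L`. -/
noncomputable def inflowEdge (n : ℕ) (L : Set Tri) (d : Flow) (e : EdgeK) : ℝ :=
  if inL n L (upOf e) then d.thru e else -(d.thru e)

/-- `in(L,e,d)`. -/
noncomputable def inPosEdge (n : ℕ) (L : Set Tri) (d : Flow) (e : EdgeK) : ℝ :=
  max (inflowEdge n L d e) 0

/-- `out(L,e,d)`. -/
noncomputable def outPosEdge (n : ℕ) (L : Set Tri) (d : Flow) (e : EdgeK) : ℝ :=
  max (-(inflowEdge n L d e)) 0

/-- `in(L,a,d)`: the `L`-inflow of `d` through the side `a` (given as the list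
of its edges). -/
noncomputable def inSide (n : ℕ) (L : Set Tri) (d : Flow) (s : List EdgeK) : ℝ :=
  (s.map (inPosEdge n L d)).sum

/-- `out(L,a,d)`. -/
noncomputable def outSide (n : ℕ) (L : Set Tri) (d : Flow) (s : List EdgeK) : ℝ :=
  (s.map (outPosEdge n L d)).sum

/-- `v = (m,i)` is a vertex of the hive triangle `T`. -/
def vertexInTri (v : ℕ × ℕ) (T : Tri) : Prop :=
  match T with
  | .up m i => v = (m, i) ∨ v = (m+1, i) ∨ v = (m+1, i+1)
  | .down m i => v = (m, i) ∨ v = (m, i+1) ∨ v = (m+1, i+1)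

/-- The six hive triangles around an interior vertex `x(m,i)`. -/
def sixAround (m i : ℕ) : List Tri :=
  [.up m i, .down m i, .up (m-1) i, .down (m-1) (i-1), .up (m-1) (i-1), .down m (i-1)]

/-- The vertex `x(m,i)` is interior and all six hive triangles around it
belong to `L`. -/
def SurroundedVertex (n : ℕ) (L : Set Tri) (m i : ℕ) : Prop :=
  1 ≤ i ∧ i + 1 ≤ m ∧ m + 1 ≤ n ∧ ∀ T ∈ sixAround m i, T ∈ L

/-- An inner triangle of `L`: all of its vertices are surrounded by triangles
of `L`.  Triangles of `L` that are not inner are the border triangles. -/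
def InnerTri (n : ℕ) (L : Set Tri) (T : Tri) : Prop :=
  ∀ m i, vertexInTri (m, i) T → SurroundedVertex n L m i

/-- The hive triangle adjacent to `thirdSide t` on the other side of the
triangle of `t` belongs to `L`.  (For a counterclockwise turn this is the
rhombus through whose acute angle the turn passes.) -/
def acrossInL (n : ℕ) (L : Set Tri) (t : Turn) : Prop :=
  (upOf (thirdSide t) ≠ t.tri ∧ inL n L (upOf (thirdSide t))) ∨
  (∃ T', dnOf? (thirdSide t) = some T' ∧ T' ≠ t.tri ∧ inL n L T')

/-! ### Weighted families of complete turnpaths -/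

/-- A weighted family of complete turnpaths for the adjacency `A`: a
nonnegative weight on lists of `R`-vertices supported on complete turnpaths. -/
def WeightedFamily (A : RVertex → RVertex → Prop) (φ : List RVertex → ℝ) : Prop :=
  (∀ l, 0 ≤ φ l) ∧ ∀ l, ¬ IsCompleteTP A l → φ l = 0

/-- The turnpath `l` enters `L` by crossing the entrance edge of the side `s`. -/
def EntersVia (n : ℕ) (L : Set Tri) (s : List EdgeK) (l : List RVertex) : Prop :=
  ∃ e, entranceOf n L s e ∧ ∃ t : Turn, RVertex.turn t ∈ l ∧ t.inE = e ∧ inL n L t.tri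

/-- The turnpath `l` exits `L` by crossing the exit edge of the side `s`. -/
def ExitsVia (n : ℕ) (L : Set Tri) (s : List EdgeK) (l : List RVertex) : Prop :=
  ∃ e, exitOf n L s e ∧ ∃ t : Turn, RVertex.turn t ∈ l ∧ t.outE = e ∧ inL n L t.tri

/-- The entrance weight `in(L,a,φ)`. -/
noncomputable def inWeight (n : ℕ) (L : Set Tri) (s : List EdgeK)
    (φ : List RVertex → ℝ) : ℝ :=
  ∑ᶠ l ∈ {l : List RVertex | EntersVia n L s l}, φ l

/-- The exit weight `out(L,a,φ)`. -/
noncomputable def outWeight (n : ℕ) (L : Set Tri) (s : List EdgeK)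
    (φ : List RVertex → ℝ) : ℝ :=
  ∑ᶠ l ∈ {l : List RVertex | ExitsVia n L s l}, φ l

/-- A flow class `d` is `f`-hive preserving if `f + ε d ∈ B(λ,μ,ν)` for all
sufficiently small `ε > 0`. -/
def HivePreserving (n : ℕ) (lam mu nu : ℕ → ℕ) (f d : Flow) : Prop :=
  ∃ ε₀ : ℝ, 0 < ε₀ ∧ ∀ ε : ℝ, 0 < ε → ε ≤ ε₀ → MemB n lam mu nu (f + ε • d)

/-- The throughput of `π(d')` through the edge `e`, for the nonnegative flow
`d' = ∑_p φ(p)·p` on `R_f` determined by a weighted family `φ`. -/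
noncomputable def wDelta (φ : List RVertex → ℝ) (e : EdgeK) : ℝ :=
  ∑ᶠ l : List RVertex, φ l * pathDelta l e

/-- The overall throughput `δ(π(d'))` of the flow `d' = ∑_p φ(p)·p` on `R_f`. -/
noncomputable def piThr (n : ℕ) (φ : List RVertex → ℝ) : ℝ :=
  ∑ m ∈ Finset.range n, wDelta φ (.dr m m) + ∑ i ∈ Finset.range n, wDelta φ (.hz n i)

/-! ### Distance between flow classes -/

/-- The `L₁`-distance between two flow classes: the sum over the edges of `Δ`
of the absolute differences of the throughputs. -/
noncomputable def distFlow (n : ℕ) (f g : Flow) : ℝ :=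
  ∑ m ∈ Finset.range (n+1), ∑ i ∈ Finset.range (n+1),
    ((if i ≤ m ∧ m + 1 ≤ n then |g.dl m i - f.dl m i| else 0) +
     (if i ≤ m ∧ m + 1 ≤ n then |g.dr m i - f.dr m i| else 0) +
     (if i + 1 ≤ m ∧ m ≤ n then |g.hz m i - f.hz m i| else 0))

/-! ### Hives as functions on the vertices of `Δ` -/

/-- A hive on `Δ`: a function on the vertices `x(m,i)` (`i ≤ m ≤ n`) with
`h(x₀) = 0` at the top vertex, such that for every rhombus the sum of the
values at the two obtuse vertices is at least the sum at the two acute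
vertices. -/
def IsHiveFn (n : ℕ) (h : ℕ → ℕ → ℝ) : Prop :=
  h 0 0 = 0 ∧
  (∀ m i, i ≤ m → m + 2 ≤ n → h m i + h (m+2) (i+1) ≤ h (m+1) i + h (m+1) (i+1)) ∧
  (∀ m i, i + 1 ≤ m → m + 1 ≤ n → h m i + h (m+1) (i+2) ≤ h m (i+1) + h (m+1) (i+1)) ∧
  (∀ m i, i + 1 ≤ m → m + 1 ≤ n → h (m+1) i + h m (i+1) ≤ h m i + h (m+1) (i+1))

/-- A vertex of `Δ` lying on the boundary of the big triangle. -/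
def BdryVtx (n : ℕ) (m i : ℕ) : Prop :=
  i ≤ m ∧ m ≤ n ∧ (i = 0 ∨ i = m ∨ m = n)

/-! ### Convex sets and canonical turnpaths -/

/-- Planar coordinates of the vertex `x(m,i)` (up to an affine change of
coordinates, which does not affect convexity). -/
def vtxPoint (m i : ℕ) : ℝ × ℝ := (2 * (i : ℝ) - (m : ℝ), -(m : ℝ))

/-- The closed triangle in the plane corresponding to a hive triangle. -/
def triHull (T : Tri) : Set (ℝ × ℝ) :=
  match T with
  | .up m i => convexHull ℝ {vtxPoint m i, vtxPoint (m+1) i, vtxPoint (m+1) (i+1)}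
  | .down m i => convexHull ℝ {vtxPoint m i, vtxPoint m (i+1), vtxPoint (m+1) (i+1)}

/-- A convex set in the triangular graph `Δ`: a nonempty union of (valid) hive
triangles that is convex as a subset of the plane. -/
def IsConvexSet (n : ℕ) (L : Set Tri) : Prop :=
  L.Nonempty ∧ (∀ T ∈ L, T.valid n) ∧ Convex ℝ (⋃ T ∈ L, triHull T)

/-- The edge `e` belongs to (a triangle of) `L`. -/
def edgeInL (L : Set Tri) (e : EdgeK) : Prop := ∃ T ∈ L, sideOf e T

/-- A hive flow on the convex set `L`: a flow class on the subgraph `G_L`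
(conservation holds at the black vertices of all triangles of `L`; values on
edges outside `L` vanish) whose slack is nonnegative on every rhombus
contained in `L`. -/
def HiveFlowOn (n : ℕ) (L : Set Tri) (d : Flow) : Prop :=
  (∀ m i, Tri.up m i ∈ L → d.dl m i + d.dr m i + d.hz (m+1) i = 0) ∧
  (∀ m i, Tri.down m i ∈ L → d.hz m i + d.dl m (i+1) + d.dr m i = 0) ∧
  (∀ ρ : Rhombus, ρ.valid n → ρ.triU ∈ L → ρ.triD ∈ L → 0 ≤ slack d ρ) ∧
  (∀ e : EdgeK, ¬ edgeInL L e → d.thru e = 0)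

/-- The two endpoints of an edge of `Δ`. -/
def edgeEnds : EdgeK → (ℕ × ℕ) × (ℕ × ℕ)
  | .dl m i => ((m, i), (m+1, i))
  | .dr m i => ((m, i), (m+1, i+1))
  | .hz m i => ((m, i), (m, i+1))

/-- `v` is an obtuse (120°) corner of `L`: exactly two triangles of `L`
contain `v`. -/
def ObtuseCornerAt (n : ℕ) (L : Set Tri) (v : ℕ × ℕ) : Prop :=
  ∃ T₁ T₂ : Tri, T₁ ≠ T₂ ∧ inL n L T₁ ∧ inL n L T₂ ∧
    vertexInTri v T₁ ∧ vertexInTri v T₂ ∧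
    ∀ T, inL n L T → vertexInTri v T → T = T₁ ∨ T = T₂

/-- Some endpoint of `e` is an obtuse corner of `L`. -/
def EndsAtObtuse (n : ℕ) (L : Set Tri) (e : EdgeK) : Prop :=
  ObtuseCornerAt n L (edgeEnds e).1 ∨ ObtuseCornerAt n L (edgeEnds e).2

/-- A canonical turnpath of the convex set `L` (recorded by its list of
turns): either a single clockwise turn at an acute corner of `L`, or a
turnpath through the border triangles of `L`, starting at the entrance edge of
a side and ending at the exit edge of a side, traversing the border of `L`
counterclockwise (every counterclockwise turn closes off a rhombus leaving
`L`), never using two consecutive clockwise turns, and using two consecutive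
counterclockwise turns only to go around an obtuse corner of `L`. -/
def CanonicalTP (n : ℕ) (L : Set Tri) (p : List Turn) : Prop :=
  (∃ t, p = [t] ∧ t.valid n ∧ t.tri ∈ L ∧ IsCWTurn t ∧
    BorderEdge n L t.inE ∧ BorderEdge n L t.outE) ∨
  (2 ≤ p.length ∧
    (∀ t ∈ p, t.valid n ∧ inL n L t.tri ∧ ¬ InnerTri n L t.tri) ∧
    p.Chain' (fun t t' => TurnEdge t t' ∧ ¬ BorderEdge n L t.outE ∧
      ¬ (IsCWTurn t ∧ IsCWTurn t') ∧
      (IsCCWTurn t ∧ IsCCWTurn t' → EndsAtObtuse n L t.outE)) ∧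
    (∀ t ∈ p, IsCCWTurn t → ¬ acrossInL n L t) ∧
    (∀ t, p.head? = some t → ∃ s, IsSide n L s ∧ entranceOf n L s t.inE) ∧
    (∀ t, p.getLast? = some t → ∃ s, IsSide n L s ∧ exitOf n L s t.outE))

/-- A multiset of canonical turnpaths of `L`. -/
def MultisetCanonical (n : ℕ) (L : Set Tri) (φ : List Turn → ℕ) : Prop :=
  ∀ p, φ p ≠ 0 → CanonicalTP n L p

/-- `in(L,a,φ)`: the number, counted with multiplicity, of canonical
turnpaths of `φ` starting at the entrance edge of the side `a = s`. -/
noncomputable def inMs (n : ℕ) (L : Set Tri) (s : List EdgeK) (φ : List Turn → ℕ) : ℝ :=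
  ∑ᶠ p ∈ {p : List Turn | ∃ t, p.head? = some t ∧ entranceOf n L s t.inE}, (φ p : ℝ)

/-- `out(L,a,φ)`: the number, counted with multiplicity, of canonical
turnpaths of `φ` ending at the exit edge of the side `a = s`. -/
noncomputable def outMs (n : ℕ) (L : Set Tri) (s : List EdgeK) (φ : List Turn → ℕ) : ℝ :=
  ∑ᶠ p ∈ {p : List Turn | ∃ t, p.getLast? = some t ∧ exitOf n L s t.outE}, (φ p : ℝ)

end LRFlows

namespace LRFlows

/-- In the hexagon configuration around an interior vertex `v = x(m,i)`
(two trapezoids, each a union of two overlapping rhombi, glued along their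
common longer side), for every hive flow `f`: if the two rhombi of one
trapezoid are `f`-flat then so are the two rhombi of the other trapezoid
(for each of the three splittings of the hexagon). -/
theorem hexagon_flatness_transfer (n : ℕ) (hn : 1 ≤ n) (f : Flow)
    (hf0 : Normalized n f) (hf : IsHive n f)
    (m i : ℕ) (hi : 1 ≤ i) (him : i + 1 ≤ m) (hm : m + 1 ≤ n) :
    ((slack f (.dlD (m-1) (i-1)) = 0 ∧ slack f (.hzD (m-1) i) = 0) ↔
      (slack f (.dlD m (i-1)) = 0 ∧ slack f (.hzD (m-1) (i-1)) = 0)) ∧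
    ((slack f (.hzD (m-1) i) = 0 ∧ slack f (.drD m i) = 0) ↔
      (slack f (.hzD (m-1) (i-1)) = 0 ∧ slack f (.drD (m-1) (i-1)) = 0)) ∧
    ((slack f (.drD (m-1) (i-1)) = 0 ∧ slack f (.dlD (m-1) (i-1)) = 0) ↔
      (slack f (.drD m i) = 0 ∧ slack f (.dlD m (i-1)) = 0)) := by
  obtain ⟨I, rfl⟩ : ∃ I, i = I + 1 := ⟨i - 1, by omega⟩
  obtain ⟨M, rfl⟩ : ∃ M, m = M + 1 := ⟨m - 1, by omega⟩
  simp only [Nat.add_sub_cancel]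
  obtain ⟨hup, hdn⟩ := hf.1
  have e1 := hup (M+1) (I+1) (by omega) (by omega)
  have e2 := hdn (M+1) I (by omega) (by omega)
  have e3 := hup M I (by omega) (by omega)
  have e4 := hdn M I (by omega) (by omega)
  have e5 := hup M (I+1) (by omega) (by omega)
  have e6 := hdn (M+1) (I+1) (by omega) (by omega)
  have s1 := hf.2 (.dlD M I) ⟨by omega, by omega⟩
  have s2 := hf.2 (.hzD M (I+1)) ⟨by omega, by omega⟩
  have s3 := hf.2 (.dlD (M+1) I) ⟨by omega, by omega⟩
  have s4 := hf.2 (.hzD M I) ⟨by omega, by omega⟩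
  have s5 := hf.2 (.drD (M+1) (I+1)) ⟨by omega, by omega⟩
  have s6 := hf.2 (.drD M I) ⟨by omega, by omega⟩
  simp only [slack] at *
  refine ⟨⟨fun ⟨h1, h2⟩ => ⟨by linarith, by linarith⟩,
           fun ⟨h1, h2⟩ => ⟨by linarith, by linarith⟩⟩,
          ⟨fun ⟨h1, h2⟩ => ⟨by linarith, by linarith⟩,
           fun ⟨h1, h2⟩ => ⟨by linarith, by linarith⟩⟩,
          ⟨fun ⟨h1, h2⟩ => ⟨by linarith, by linarith⟩,
           fun ⟨h1, h2⟩ => ⟨by linarith, by linarith⟩⟩⟩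

end LRFlows
end

section
/- Let λ, μ, ν ∈ ℕⁿ be weakly decreasing with |ν| = |λ| + |μ|, let f ∈ B(λ,μ,ν)_ℤ, and let p be an s-t-turnpath of minimal length in R_f. Then p does not use both a turnvertex and its reverse turnvertex (the same turn traversed in the opposite direction). -/
/-!
Let `t` stand at position `i` and `t.rev` at position `j ≥ i` of a shortest path, and let `x`, `y`
be the vertices just before `t` and just after `t.rev`. If `x` or `y` is the source or the target,
then `x → y` is already an edge of `R_f`, a shortcut. Otherwise `x` and `y` are turns `u`, `w` in the
hive triangle `T` on the other side of `t.inE`. If `w = u.rev` we pass to this outer pair. If not,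
the single turn `u.join w` of `T` replaces the segment from `u` to `w`: were it, or a turnedge
into or out of it, deleted in `R_f`, then the rhombus with diagonal `t.inE` (resp. `u.inE`,
`w.outE`) would be flat and `(u, t)` or `(t.rev, w)` (resp. `w`, `u`) would be one of its negative
contributions, which `R_f` does not contain.
-/

theorem List.Nodup.take_append_append_drop {α : Type*} {l mid : List α} (hl : l.Nodup)
    (hmid : mid.Nodup) (hfresh : ∀ v ∈ mid, v ∉ l) {k m : ℕ} (hkm : k ≤ m) :
    (l.take k ++ mid ++ l.drop m).Nodup := by
  refine List.nodup_append.2 ⟨List.nodup_append.2 ⟨hl.sublist (List.take_sublist _ _), hmid, ?_⟩,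
    hl.sublist (List.drop_sublist _ _), ?_⟩
  · rintro a ha b hb rfl
    exact hfresh a hb (List.mem_of_mem_take ha)
  · rintro a ha b hb rfl
    rcases List.mem_append.1 ha with ha | ha
    · exact List.disjoint_take_drop hl hkm ha hb
    · exact hfresh a ha (List.mem_of_mem_drop hb)

theorem List.IsChain.take_append_append_drop {α : Type*} {R : α → α → Prop} {l mid : List α}
    (hl : l.IsChain R) {k m : ℕ} (hkm : k < m) (hm : m < l.length)
    (hmid : (l[k] :: (mid ++ [l[m]])).IsChain R) :
    (l.take (k + 1) ++ mid ++ l.drop m).IsChain R := by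
  have hleft : (l.take k ++ [l[k]]).IsChain R := by
    rw [List.take_append_getElem]; exact hl.take _
  have hright : ([l[m]] ++ l.drop (m + 1)).IsChain R := by
    rw [List.singleton_append, ← List.drop_eq_getElem_cons]; exact hl.drop _
  have hmid' : ([l[k]] ++ (mid ++ [l[m]])).IsChain R := hmid
  have h := hleft.append_overlap hmid' (List.cons_ne_nil _ _)
  rw [← List.append_assoc] at h
  have h' := h.append_overlap hright (List.cons_ne_nil _ _)
  rw [← List.take_append_getElem (by omega), List.drop_eq_getElem_cons hm]
  simpa only [List.append_assoc, List.singleton_append] using h'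

namespace LRFlows

namespace IsSTPath

variable {A : RVertex → RVertex → Prop} {p : List RVertex}

theorem splice (hp : IsSTPath A p) {k m : ℕ} (hkm : k < m) (hm : m < p.length)
    {mid : List RVertex} (hmid : mid.Nodup) (hfresh : ∀ v ∈ mid, v ∉ p)
    (hchain : (p[k] :: (mid ++ [p[m]])).IsChain A) :
    IsSTPath A (p.take (k + 1) ++ mid ++ p.drop m) := by
  obtain ⟨hnd, hch, hhead, hlast⟩ := hp
  refine ⟨hnd.take_append_append_drop hmid hfresh hkm, hch.take_append_append_drop hkm hm hchain,
    ?_, ?_⟩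
  · rw [List.append_assoc, List.head?_append, List.head?_take, if_neg (Nat.succ_ne_zero k), hhead]
    rfl
  · rw [List.getLast?_append_of_ne_nil _ (by simpa using hm), List.getLast?_drop,
      if_neg (by omega), hlast]

theorem getElem_zero (hp : IsSTPath A p) (h : 0 < p.length) : p[0] = .src := by
  simpa [List.head?_eq_getElem?, h] using hp.2.2.1

theorem getElem_length_sub_one (hp : IsSTPath A p) (h : p.length - 1 < p.length) :
    p[p.length - 1] = .tgt := by
  simpa [List.getLast?_eq_getElem?, h] using hp.2.2.2

theorem adj (hp : IsSTPath A p) {k : ℕ} (hk : k + 1 < p.length) : A p[k] p[k + 1] :=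
  List.isChain_iff_getElem.1 hp.2.1 k hk

theorem pos_of_getElem_eq_turn (hp : IsSTPath A p) {i : ℕ} {hi : i < p.length} {t : Turn}
    (h : p[i] = .turn t) : 0 < i := by
  rcases Nat.eq_zero_or_pos i with rfl | h0
  · rw [hp.getElem_zero hi] at h; cases h
  · exact h0

theorem succ_lt_of_getElem_eq_turn (hp : IsSTPath A p) {i : ℕ} {hi : i < p.length} {t : Turn}
    (h : p[i] = .turn t) : i + 1 < p.length := by
  by_contra hlast
  have : i = p.length - 1 := by omega
  subst this
  rw [hp.getElem_length_sub_one hi] at h; cases h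

theorem not_shortcut (hp : IsSTPath A p) (hmin : ∀ q, IsSTPath A q → p.length ≤ q.length)
    {k m : ℕ} (hkm : k + 2 ≤ m) (hm : m < p.length) (h : A p[k] p[m]) : False := by
  have hq := hp.splice (k := k) (mid := []) (by omega) hm List.nodup_nil (by simp)
    (by simpa using h)
  have := hmin _ hq
  simp only [List.length_append, List.length_take, List.length_drop, List.length_nil] at this
  omega

theorem not_bypass (hp : IsSTPath A p) (hmin : ∀ q, IsSTPath A q → p.length ≤ q.length)
    {k m : ℕ} (hkm : k + 3 ≤ m) (hm : m < p.length) {v : RVertex} (h₁ : A p[k] v)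
    (h₂ : A v p[m]) : False := by
  by_cases hv : v ∈ p
  · obtain ⟨z, hz, rfl⟩ := List.getElem_of_mem hv
    by_cases hzm : z + 2 ≤ m
    · exact hp.not_shortcut hmin hzm hm h₂
    · exact hp.not_shortcut hmin (by omega) hz h₁
  · have hq := hp.splice (k := k) (mid := [v]) (by omega) hm (List.nodup_singleton v)
      (by simpa using hv) (by simpa using ⟨h₁, h₂⟩)
    have := hmin _ hq
    simp only [List.length_append, List.length_take, List.length_drop, List.length_singleton] at this
    omega

end IsSTPath

section Triangle

variable {T T' T'' : Tri} {a b c e : EdgeK}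

theorem sideOf_up {m i : ℕ} :
    sideOf e (.up m i) ↔ e = .dr m i ∨ e = .hz (m + 1) i ∨ e = .dl m i := by
  simp [sideOf, Tri.sides]

theorem sideOf_down {m i : ℕ} :
    sideOf e (.down m i) ↔ e = .hz m i ∨ e = .dl m (i + 1) ∨ e = .dr m i := by
  simp [sideOf, Tri.sides]

theorem cwNext_cwNext_cwNext (h : sideOf e T) : cwNext T (cwNext T (cwNext T e)) = e := by
  cases T <;> simp only [sideOf_up, sideOf_down] at h <;>
    rcases h with rfl | rfl | rfl <;> simp [cwNext]

theorem cwNext_cwNext_ne_self (h : sideOf e T) : cwNext T (cwNext T e) ≠ e := by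
  cases T <;> simp only [sideOf_up, sideOf_down] at h <;>
    rcases h with rfl | rfl | rfl <;> simp [cwNext]

theorem cwNext_inj (ha : sideOf a T) (hb : sideOf b T) : cwNext T a = cwNext T b ↔ a = b := by
  refine ⟨fun h => ?_, congrArg _⟩
  rw [← cwNext_cwNext_cwNext ha, ← cwNext_cwNext_cwNext hb, h]

theorem eq_cwNext_or_eq_cwNext (ha : sideOf a T) (hb : sideOf b T) (hab : a ≠ b) :
    b = cwNext T a ∨ a = cwNext T b := by
  cases T <;> simp only [sideOf_up, sideOf_down] at ha hb <;>
    rcases ha with rfl | rfl | rfl <;> rcases hb with rfl | rfl | rfl <;> simp_all [cwNext]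

theorem sides_cyclic (ha : sideOf a T) (hb : sideOf b T) (hc : sideOf c T) (hab : a ≠ b)
    (hbc : b ≠ c) (hca : c ≠ a) :
    (b = cwNext T a ∧ c = cwNext T b ∧ a = cwNext T c) ∨
      (a = cwNext T b ∧ b = cwNext T c ∧ c = cwNext T a) := by
  cases T <;> simp only [sideOf_up, sideOf_down] at ha hb hc <;>
    rcases ha with rfl | rfl | rfl <;> rcases hb with rfl | rfl | rfl <;>
    rcases hc with rfl | rfl | rfl <;> simp_all [cwNext]

theorem eq_upOf_or_dnOf (h : sideOf e T) : T = upOf e ∨ dnOf? e = some T := by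
  cases T <;> simp only [sideOf_up, sideOf_down] at h <;>
    rcases h with rfl | rfl | rfl <;> simp [upOf, dnOf?]

theorem eq_of_sideOf_of_ne (h : sideOf e T) (h' : sideOf e T') (h'' : sideOf e T'')
    (hne : T ≠ T'') (hne' : T' ≠ T'') : T = T' := by
  rcases eq_upOf_or_dnOf h with rfl | hT <;> rcases eq_upOf_or_dnOf h' with rfl | hT' <;>
    rcases eq_upOf_or_dnOf h'' with rfl | hT'' <;> simp_all

theorem eq_of_sideOf_of_sideOf (hne : T ≠ T') (haT : sideOf a T) (haT' : sideOf a T')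
    (hbT : sideOf b T) (hbT' : sideOf b T') : a = b := by
  cases T <;> cases T' <;> simp only [sideOf_up, sideOf_down] at haT haT' hbT hbT' <;>
    rcases haT with rfl | rfl | rfl <;> rcases hbT with rfl | rfl | rfl <;> simp_all

theorem Rhombus.sideOf_diag_iff (ρ : Rhombus) : sideOf ρ.diag T ↔ T = ρ.triU ∨ T = ρ.triD := by
  cases ρ <;> cases T <;>
    simp [sideOf_up, sideOf_down, Rhombus.diag, Rhombus.triU, Rhombus.triD] <;> omega

end Triangle

section Turns

def Turn.rev (t : Turn) : Turn := ⟨t.tri, t.outE, t.inE⟩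

def Turn.join (u w : Turn) : Turn := ⟨u.tri, u.inE, w.outE⟩

variable {n : ℕ} {f : Flow} {t u w : Turn}

theorem Turn.isCWTurn_or_isCCWTurn (ht : t.valid n) : IsCWTurn t ∨ IsCCWTurn t :=
  (eq_cwNext_or_eq_cwNext ht.2.1 ht.2.2.1 ht.2.2.2).symm

theorem Turn.join_orientation (hu : u.valid n) (hw : w.valid n) (htri : u.tri = w.tri)
    (hα : u.outE = w.inE) (hne : u.inE ≠ w.outE) :
    (IsCCWTurn u ∧ IsCCWTurn w ∧ IsCWTurn (u.join w)) ∨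
      (IsCWTurn u ∧ IsCWTurn w ∧ IsCCWTurn (u.join w)) := by
  have hg : sideOf w.outE u.tri := htri ▸ hw.2.2.1
  have hgα : w.outE ≠ u.outE := hα ▸ hw.2.2.2.symm
  have := sides_cyclic hu.2.1 hu.2.2.1 hg hu.2.2.2 hgα.symm hne.symm
  simp only [IsCCWTurn, IsCWTurn, Turn.join, ← htri, ← hα]
  tauto

theorem not_isCWTurn_of_isCCWTurn (h : sideOf t.inE t.tri) (hccw : IsCCWTurn t) :
    ¬ IsCWTurn t := fun hcw =>
  cwNext_cwNext_ne_self h (by rw [IsCCWTurn] at hccw; rw [← hccw, ← hcw])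

theorem delTurn_iff : DelTurn n f t ↔ ∃ ρ : Rhombus, ρ.valid n ∧ slack f ρ = 0 ∧
    sideOf ρ.diag t.tri ∧ t.inE = cwNext t.tri ρ.diag ∧ IsCCWTurn t := by
  constructor
  · rintro ⟨ρ, hρ, hflat, j, hj⟩
    refine ⟨ρ, hρ, hflat, ?_⟩
    fin_cases j <;>
      simp only [negContrib, Fin.zero_eta, Fin.mk_one, Fin.reduceFinMk, Fin.isValue,
        Matrix.cons_val_zero, Matrix.cons_val_one, Matrix.cons_val, Contrib.single.injEq,
        reduceCtorEq] at hj <;>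
      subst hj
    · exact ⟨(ρ.sideOf_diag_iff).2 (.inl rfl), rfl, rfl⟩
    · exact ⟨(ρ.sideOf_diag_iff).2 (.inr rfl), rfl, rfl⟩
  · rintro ⟨ρ, hρ, hflat, hδ, hin, hccw⟩
    obtain ⟨T, d, g⟩ := t
    simp only [IsCCWTurn] at hin hccw hδ
    subst hin hccw
    refine ⟨ρ, hρ, hflat, ?_⟩
    rcases (ρ.sideOf_diag_iff).1 hδ with rfl | rfl
    exacts [⟨0, rfl⟩, ⟨1, rfl⟩]

theorem DelTurnEdge.exists_flat {t₁ t₂ : Turn} (h : DelTurnEdge n f t₁ t₂) :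
    ∃ ρ : Rhombus, ρ.valid n ∧ slack f ρ = 0 ∧ t₁.outE = ρ.diag ∧ t₂.inE = ρ.diag ∧
      IsCWTurn t₁ ∧ IsCWTurn t₂ := by
  obtain ⟨ρ, hρ, hflat, j, hj⟩ := h
  refine ⟨ρ, hρ, hflat, ?_⟩
  fin_cases j <;>
    simp only [negContrib, Fin.zero_eta, Fin.mk_one, Fin.reduceFinMk, Fin.isValue,
      Matrix.cons_val_zero, Matrix.cons_val_one, Matrix.cons_val, Contrib.double.injEq,
      reduceCtorEq] at hj <;>
    obtain ⟨rfl, rfl⟩ := hj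
  · exact ⟨rfl, rfl, rfl, (cwNext_cwNext_cwNext ((ρ.sideOf_diag_iff).2 (.inr rfl))).symm⟩
  · exact ⟨rfl, rfl, rfl, (cwNext_cwNext_cwNext ((ρ.sideOf_diag_iff).2 (.inl rfl))).symm⟩

theorem delTurnEdge_of {t₁ t₂ : Turn} {ρ : Rhombus} (hρ : ρ.valid n) (hflat : slack f ρ = 0)
    (hne : t₁.tri ≠ t₂.tri) (h₁ : sideOf ρ.diag t₁.tri) (h₂ : sideOf ρ.diag t₂.tri)
    (hout : t₁.outE = ρ.diag) (hin : t₂.inE = ρ.diag) (hcw₁ : IsCWTurn t₁) (hcw₂ : IsCWTurn t₂)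
    (hs : sideOf t₂.outE t₂.tri) : DelTurnEdge n f t₁ t₂ := by
  obtain ⟨T₁, d₁, g₁⟩ := t₁
  obtain ⟨T₂, d₂, g₂⟩ := t₂
  simp only [IsCWTurn] at *
  subst hout hin
  have hg : g₂ = cwNext T₂ (cwNext T₂ ρ.diag) := by rw [hcw₂, cwNext_cwNext_cwNext hs]
  subst hcw₁ hg
  refine ⟨ρ, hρ, hflat, ?_⟩
  rcases (ρ.sideOf_diag_iff).1 h₁ with rfl | rfl <;> rcases (ρ.sideOf_diag_iff).1 h₂ with rfl | rfl
  exacts [absurd rfl hne, ⟨2, rfl⟩, ⟨3, rfl⟩, absurd rfl hne]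

def IsResidTurn (n : ℕ) (f : Flow) (t : Turn) : Prop := t.valid n ∧ ¬ DelTurn n f t

theorem not_onLeft_of_onRight_or_onBottom {e : EdgeK} (h : onRight n e ∨ onBottom n e) :
    ¬ onLeft n e := by
  rintro ⟨m, -, rfl⟩
  rcases h with ⟨_, _, h⟩ | ⟨_, _, h⟩ <;> cases h

namespace ResidAdj

variable {lam mu nu : ℕ → ℕ} {x y : RVertex}

theorem isResidTurn_right (h : ResidAdj n lam mu nu f x (.turn t)) : IsResidTurn n f t := by
  cases x
  exacts [⟨h.1.2.1, h.2.2.1⟩, ⟨h.1.1, h.2.1⟩, ⟨h.1.1, h.2.1⟩]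

theorem isResidTurn_left (h : ResidAdj n lam mu nu f (.turn t) y) : IsResidTurn n f t := by
  cases y
  exacts [⟨h.1.1, h.2.1⟩, ⟨h.1.1, h.2.1⟩, ⟨h.1.1, h.2.1⟩]

theorem of_inE_eq {t' : Turn} (hx : x = .src ∨ x = .tgt) (h : ResidAdj n lam mu nu f x (.turn t))
    (ht' : IsResidTurn n f t') (he : t'.inE = t.inE) : ResidAdj n lam mu nu f x (.turn t') := by
  rcases hx with rfl | rfl <;> exact ⟨⟨ht'.1, he ▸ h.1.2⟩, ht'.2, he ▸ h.2.2⟩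

theorem of_outE_eq {t' : Turn} (hy : y = .src ∨ y = .tgt) (h : ResidAdj n lam mu nu f (.turn t) y)
    (ht' : IsResidTurn n f t') (he : t'.outE = t.outE) : ResidAdj n lam mu nu f (.turn t') y := by
  rcases hy with rfl | rfl <;> exact ⟨⟨ht'.1, he ▸ h.1.2⟩, ht'.2, he ▸ h.2.2⟩

theorem skip_rev (hx : ResidAdj n lam mu nu f x (.turn t))
    (hy : ResidAdj n lam mu nu f (.turn t.rev) y) (hxy : x ≠ y)
    (hb : (∀ u, x ≠ .turn u) ∨ (∀ w, y ≠ .turn w)) : ResidAdj n lam mu nu f x y := by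
  cases x with
  | turn u =>
    have hy' : y = .src ∨ y = .tgt := by
      cases y <;> simp_all
    exact hy.of_outE_eq hy' hx.isResidTurn_left hx.1.2.2.1
  | src =>
    cases y with
    | turn w => exact hx.of_inE_eq (.inl rfl) hy.isResidTurn_right hy.1.2.2.1.symm
    | src => exact absurd rfl hxy
    | tgt => exact absurd hy.1.2 (not_onLeft_of_onRight_or_onBottom hx.1.2)
  | tgt =>
    cases y with
    | turn w => exact hx.of_inE_eq (.inr rfl) hy.isResidTurn_right hy.1.2.2.1.symm
    | src => exact absurd hx.1.2 (not_onLeft_of_onRight_or_onBottom hy.1.2)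
    | tgt => exact absurd rfl hxy

theorem tri_eq_of_rev (hu : ResidAdj n lam mu nu f (.turn u) (.turn t))
    (hw : ResidAdj n lam mu nu f (.turn t.rev) (.turn w)) : u.tri = w.tri := by
  obtain ⟨⟨hu, ht, hout, hne₁, -⟩, -⟩ := hu
  obtain ⟨⟨-, hw, (hin : t.inE = w.inE), (hne₂ : t.tri ≠ w.tri), -⟩, -⟩ := hw
  exact eq_of_sideOf_of_ne (hout ▸ hu.2.2.1) (hin ▸ hw.2.1) ht.2.1 hne₁ hne₂.symm

theorem eq_rev_of_inE_eq_outE (hu : ResidAdj n lam mu nu f (.turn u) (.turn t))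
    (hw : ResidAdj n lam mu nu f (.turn t.rev) (.turn w)) (h : u.inE = w.outE) : w = u.rev := by
  have htri := tri_eq_of_rev hu hw
  obtain ⟨⟨-, -, hout, -, -⟩, -⟩ := hu
  obtain ⟨⟨-, -, (hin : t.inE = w.inE), -, -⟩, -⟩ := hw
  obtain ⟨W, b, c⟩ := w
  simp_all [Turn.rev]

theorem isResidTurn_join (hu : ResidAdj n lam mu nu f (.turn u) (.turn t))
    (hw : ResidAdj n lam mu nu f (.turn t.rev) (.turn w)) (hne : u.inE ≠ w.outE) :
    IsResidTurn n f (u.join w) := by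
  have htri := tri_eq_of_rev hu hw
  obtain ⟨⟨hu, ht, hout, hne₁, -⟩, -, -, hdel₁⟩ := hu
  obtain ⟨⟨-, hw, (hin : t.inE = w.inE), (hne₂ : t.tri ≠ w.tri), -⟩, -, -, hdel₂⟩ := hw
  have hsd : sideOf u.inE (u.join w).tri := hu.2.1
  refine ⟨⟨hu.1, hsd, htri ▸ hw.2.2.1, hne⟩, ?_⟩
  rw [delTurn_iff]
  rintro ⟨ρ, hρ, hflat, hδ, hdδ, hccw⟩
  rcases Turn.join_orientation hu hw htri (hout.trans hin) hne with
    ⟨-, -, hcw⟩ | ⟨hcwu, hcww, -⟩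
  · exact not_isCWTurn_of_isCCWTurn (t := u.join w) hsd hccw hcw
  have hδt : ρ.diag = t.inE :=
    hout ▸ (cwNext_inj hδ hu.2.2.1).1 (hdδ.symm.trans hcwu)
  rcases t.isCWTurn_or_isCCWTurn ht with hcwt | hccwt
  · exact hdel₁ (delTurnEdge_of hρ hflat hne₁ hδ (hδt ▸ ht.2.1) (hout.trans hδt.symm) hδt.symm
      hcwu hcwt ht.2.2.1)
  · exact hdel₂ (delTurnEdge_of hρ hflat hne₂ (hδt ▸ ht.2.1) (htri ▸ hδ) hδt.symm
      (hin.symm.trans hδt.symm) hccwt hcww hw.2.2.1)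

theorem join_right (hu : ResidAdj n lam mu nu f (.turn u) (.turn t))
    (hw : ResidAdj n lam mu nu f (.turn t.rev) (.turn w)) (hne : u.inE ≠ w.outE)
    (hx : ResidAdj n lam mu nu f x (.turn u)) : ResidAdj n lam mu nu f x (.turn (u.join w)) := by
  have hq := isResidTurn_join hu hw hne
  cases x with
  | src => exact hx.of_inE_eq (.inl rfl) hq rfl
  | tgt => exact hx.of_inE_eq (.inr rfl) hq rfl
  | turn v =>
    have htri := tri_eq_of_rev hu hw
    obtain ⟨⟨hu, -, hout, -, -⟩, -⟩ := hu
    obtain ⟨⟨-, hw, (hin : t.inE = w.inE), -, -⟩, -, hwdel, -⟩ := hw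
    obtain ⟨⟨hv, -, hvu, hvtri, -⟩, hvdel, -, -⟩ := hx
    refine ⟨⟨hv, hq.1, hvu, hvtri, fun hvg => hne ?_⟩, hvdel, hq.2, fun hdel => ?_⟩
    · exact eq_of_sideOf_of_sideOf hvtri (hvu ▸ hv.2.2.1) hu.2.1 (hvg ▸ hv.2.1)
        (htri ▸ hw.2.2.1)
    obtain ⟨ρ, hρ, hflat, -, hqδ, -, hcwq⟩ := hdel.exists_flat
    rcases Turn.join_orientation hu hw htri (hout.trans hin) hne with
      ⟨hccwu, hccww, -⟩ | ⟨-, -, hccwq⟩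
    · refine hwdel (delTurn_iff.2 ⟨ρ, hρ, hflat, hqδ ▸ htri ▸ hu.2.1, ?_, hccww⟩)
      rw [← htri, ← hin, ← hout, ← hqδ]
      exact hccwu
    · exact not_isCWTurn_of_isCCWTurn (t := u.join w) hu.2.1 hccwq hcwq

theorem join_left (hu : ResidAdj n lam mu nu f (.turn u) (.turn t))
    (hw : ResidAdj n lam mu nu f (.turn t.rev) (.turn w)) (hne : u.inE ≠ w.outE)
    (hy : ResidAdj n lam mu nu f (.turn w) y) : ResidAdj n lam mu nu f (.turn (u.join w)) y := by
  have hq := isResidTurn_join hu hw hne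
  cases y with
  | src => exact hy.of_outE_eq (.inl rfl) hq rfl
  | tgt => exact hy.of_outE_eq (.inr rfl) hq rfl
  | turn v =>
    have htri := tri_eq_of_rev hu hw
    obtain ⟨⟨hu, -, hout, -, -⟩, hudel, -⟩ := hu
    obtain ⟨⟨-, hw, (hin : t.inE = w.inE), -, -⟩, -⟩ := hw
    obtain ⟨⟨-, hv, hwv, hwtri, -⟩, -, hvdel, -⟩ := hy
    refine ⟨⟨hq.1, hv, hwv, htri ▸ hwtri, fun hdv => hne ?_⟩, hq.2, hvdel, fun hdel => ?_⟩
    · exact eq_of_sideOf_of_sideOf (htri ▸ hwtri) hu.2.1 (hdv ▸ hv.2.2.1) (htri ▸ hw.2.2.1)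
        (hwv ▸ hv.2.1)
    obtain ⟨ρ, hρ, hflat, hqδ, -, hcwq, -⟩ := hdel.exists_flat
    rcases Turn.join_orientation hu hw htri (hout.trans hin) hne with
      ⟨hccwu, -, -⟩ | ⟨-, -, hccwq⟩
    · exact hudel (delTurn_iff.2 ⟨ρ, hρ, hflat, hqδ ▸ htri ▸ hw.2.2.1, hqδ ▸ hcwq, hccwu⟩)
    · exact not_isCWTurn_of_isCCWTurn (t := u.join w) hu.2.1 hccwq hcwq

end ResidAdj

end Turns

theorem IsSTPath.getElem_ne_turn_rev {n : ℕ} {lam mu nu : ℕ → ℕ} {f : Flow} {p : List RVertex}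
    (hp : IsSTPath (ResidAdj n lam mu nu f) p)
    (hmin : ∀ q, IsSTPath (ResidAdj n lam mu nu f) q → p.length ≤ q.length) {i j : ℕ} (hij : i ≤ j)
    (hi : i < p.length) (hj : j < p.length) {t : Turn} (ht : p[i] = .turn t) :
    p[j] ≠ .turn t.rev := by
  induction i generalizing j t with
  | zero => exact absurd ht (by rw [hp.getElem_zero]; simp)
  | succ i ih =>
    intro hrt
    have hj₁ := hp.succ_lt_of_getElem_eq_turn hrt
    have hx : ResidAdj n lam mu nu f p[i] (.turn t) := ht ▸ hp.adj hi
    have hy : ResidAdj n lam mu nu f (.turn t.rev) p[j + 1] := hrt ▸ hp.adj hj₁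
    by_cases hb : (∀ u, p[i] ≠ .turn u) ∨ (∀ w, p[j + 1] ≠ .turn w)
    · have hxy : p[i] ≠ p[j + 1] := by rw [Ne, hp.1.getElem_inj_iff]; omega
      exact hp.not_shortcut hmin (by omega) hj₁ (hx.skip_rev hy hxy hb)
    push Not at hb
    obtain ⟨⟨u, hu⟩, ⟨w, hw⟩⟩ := hb
    rw [hu] at hx
    rw [hw] at hy
    by_cases hwu : w = u.rev
    · exact ih (by omega) (by omega) hj₁ hu (hwu ▸ hw)
    have hne : u.inE ≠ w.outE := fun h => hwu (hx.eq_rev_of_inE_eq_outE hy h)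
    obtain ⟨k, rfl⟩ : ∃ k, i = k + 1 := Nat.exists_eq_add_one.2 (hp.pos_of_getElem_eq_turn hu)
    have hj₂ := hp.succ_lt_of_getElem_eq_turn hw
    exact hp.not_bypass hmin (k := k) (m := j + 2) (by omega) hj₂
      (hx.join_right hy hne (hu ▸ hp.adj (k := k) (by omega)))
      (hx.join_left hy hne (hw ▸ hp.adj hj₂))

theorem shortest_path_no_reverse_turn_general (n : ℕ) (lam mu nu : ℕ → ℕ)
    (f : Flow)
    (p : List RVertex) (hp : IsSTPath (ResidAdj n lam mu nu f) p)
    (hmin : ∀ q : List RVertex, IsSTPath (ResidAdj n lam mu nu f) q → p.length ≤ q.length) :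
    ∀ t : Turn, RVertex.turn t ∈ p → RVertex.turn ⟨t.tri, t.outE, t.inE⟩ ∉ p := by
  intro t ht hrt
  obtain ⟨i, hi, hti⟩ := List.getElem_of_mem ht
  obtain ⟨j, hj, htj⟩ := List.getElem_of_mem hrt
  rcases le_total i j with hij | hji
  · exact hp.getElem_ne_turn_rev hmin hij hi hj hti htj
  · exact hp.getElem_ne_turn_rev hmin hji hj hi htj hti

/-- A shortest `s`-`t`-turnpath in `R_f` cannot use a turnvertex and its
reverse turnvertex. -/
theorem shortest_path_no_reverse_turn (n : ℕ) (hn : 1 ≤ n) (lam mu nu : ℕ → ℕ)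
    (hpart : PartitionData n lam mu nu)
    (f : Flow) (hf : MemBZ n lam mu nu f)
    (p : List RVertex) (hp : IsSTPath (ResidAdj n lam mu nu f) p)
    (hmin : ∀ q : List RVertex, IsSTPath (ResidAdj n lam mu nu f) q → p.length ≤ q.length) :
    ∀ t : Turn, RVertex.turn t ∈ p → RVertex.turn ⟨t.tri, t.outE, t.inE⟩ ∉ p :=
  shortest_path_no_reverse_turn_general n lam mu nu f p hp hmin

end LRFlows
end
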